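/- arXiv:math/0008179 — 4 statements merged into one kernel-verified Lean document; each statement's English description precedes it below -/
import Mathlib

section
/- Let A be a C*-algebra, a = a* a self-adjoint element of A, and b ∈ A. Let f be a nonnegative smooth integrable function on ℝ with ∫ f(t) dt = 1. Define b₁ = ∫ f(t) e^{ita} b e^{-ita} dt. Then ‖b - b₁‖ ≤ (∫ f(t)|t| dt) · ‖ab - ba‖ and ‖a b₁ - b₁ a‖ ≤ ‖ab - ba‖. -/
/-!
The path `t ↦ e^{tx} b e^{-tx}`, for `x = i a` skew-adjoint, has derivative
`e^{tx} (x b - b x) e^{-tx}`, whose norm is `‖a b - b a‖` because `e^{tx}` is unitary; by the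
mean value inequality it stays within `|t| ‖a b - b a‖` of `b`, and averaging against the
probability density `f` gives the first bound. Since `a` commutes with `e^{tx}`, the commutator
of `a` with `e^{tx} b e^{-tx}` is `e^{tx} (a b - b a) e^{-tx}`, and averaging these elements of
norm `‖a b - b a‖` gives the second.
-/

open MeasureTheory Complex NormedSpace

section ExpConj

variable {𝔸 : Type*} [NormedRing 𝔸] [NormedAlgebra ℝ 𝔸]

noncomputable def expConj (x b : 𝔸) (t : ℝ) : 𝔸 :=
  exp (t • x) * b * exp ((-t) • x)

@[simp]
theorem expConj_zero (x b : 𝔸) : expConj x b 0 = b := by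
  simp [expConj]

theorem Commute.mul_expConj_sub_expConj_mul {c x : 𝔸} (h : Commute c x) (b : 𝔸) (t : ℝ) :
    c * expConj x b t - expConj x b t * c = expConj x (c * b - b * c) t := by
  have hc : ∀ s : ℝ, c * NormedSpace.exp (s • x) = NormedSpace.exp (s • x) * c :=
    fun s => (h.smul_right s).exp_right.eq
  simp only [expConj]
  rw [← mul_assoc, ← mul_assoc, hc, mul_assoc _ (NormedSpace.exp _) c, ← hc (-t)]
  noncomm_ring

variable [CompleteSpace 𝔸]

theorem hasDerivAt_expConj (x b : 𝔸) (t : ℝ) :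
    HasDerivAt (expConj x b) (expConj x (x * b - b * x) t) t := by
  have hneg : HasDerivAt (fun s : ℝ => exp ((-s) • x)) (-(exp ((-t) • x) * x)) t := by
    simpa [Function.comp_def] using
      (hasDerivAt_exp_smul_const x (-t)).scomp t (hasDerivAt_neg t)
  convert ((hasDerivAt_exp_smul_const x t).mul_const b).mul hneg using 1
  · rfl
  · rw [expConj, ← ((Commute.refl x).smul_right (-t)).exp_right.eq]
    noncomm_ring

theorem continuous_expConj (x b : 𝔸) : Continuous (expConj x b) :=
  continuous_iff_continuousAt.2 fun t => (hasDerivAt_expConj x b t).continuousAt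

end ExpConj

section CStarAlgebra

variable {A : Type*} [CStarAlgebra A] {x : A}

theorem exp_smul_mem_unitary_of_mem_skewAdjoint (hx : x ∈ skewAdjoint A) (t : ℝ) :
    exp (t • x) ∈ unitary A := by
  let +nondep : NormedAlgebra ℚ A := .restrictScalars ℚ ℂ A
  exact exp_mem_unitary_of_mem_skewAdjoint (skewAdjoint.smul_mem t hx)

theorem norm_expConj (hx : x ∈ skewAdjoint A) (b : A) (t : ℝ) : ‖expConj x b t‖ = ‖b‖ := by
  rw [expConj, CStarRing.norm_mul_mem_unitary _ (exp_smul_mem_unitary_of_mem_skewAdjoint hx _),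
    CStarRing.norm_mem_unitary_mul _ (exp_smul_mem_unitary_of_mem_skewAdjoint hx _)]

theorem norm_expConj_sub_le (hx : x ∈ skewAdjoint A) (b : A) (t : ℝ) :
    ‖expConj x b t - b‖ ≤ |t| * ‖x * b - b * x‖ := by
  have := convex_univ.norm_image_sub_le_of_norm_hasDerivWithin_le
    (fun s _ => (hasDerivAt_expConj x b s).hasDerivWithinAt)
    (fun s _ => (norm_expConj hx _ s).le) (Set.mem_univ 0) (Set.mem_univ t)
  simpa [Real.norm_eq_abs, mul_comm] using this

end CStarAlgebra

section Averaging

variable {α : Type*} [MeasurableSpace α] {μ : Measure α}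

theorem norm_integral_smul_le_of_norm_le {E : Type*} [NormedAddCommGroup E] [NormedSpace ℝ E]
    {f C : α → ℝ} {g : α → E} (hf : ∀ t, 0 ≤ f t) (hfC : Integrable (fun t => f t * C t) μ)
    (hg : ∀ t, ‖g t‖ ≤ C t) : ‖∫ t, f t • g t ∂μ‖ ≤ ∫ t, f t * C t ∂μ :=
  norm_integral_le_of_norm_le hfC <| ae_of_all _ fun t => by
    rw [norm_smul, Real.norm_of_nonneg (hf t)]
    exact mul_le_mul_of_nonneg_left (hg t) (hf t)

theorem sub_integral_smul_eq_integral_smul_sub {E : Type*} [NormedAddCommGroup E]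
    [NormedSpace ℝ E] [CompleteSpace E] {f : α → ℝ} {g : α → E} (hf : Integrable f μ)
    (hf_one : ∫ t, f t ∂μ = 1)
    (hfg : Integrable (fun t => f t • g t) μ) (b : E) :
    b - ∫ t, f t • g t ∂μ = ∫ t, f t • (b - g t) ∂μ := by
  simp_rw [smul_sub]
  rw [integral_sub (hf.smul_const b) hfg, integral_smul_const, hf_one, one_smul]

theorem mul_integral_sub_integral_mul {A : Type*} [NormedRing A] [NormedAlgebra ℝ A]
    {g : α → A} (hg : Integrable g μ) (c : A) :
    c * ∫ t, g t ∂μ - (∫ t, g t ∂μ) * c = ∫ t, (c * g t - g t * c) ∂μ := by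
  rw [integral_sub (hg.const_mul c) (hg.mul_const c), integral_const_mul_of_integrable hg,
    integral_mul_const_of_integrable hg]

end Averaging

theorem stmt0_general {A : Type*} [CStarAlgebra A]
    (a b : A) (ha : IsSelfAdjoint a)
    (f : ℝ → ℝ) (hf_nonneg : ∀ t, 0 ≤ f t)
    (hf_int : Integrable f) (hf_one : (∫ t, f t) = 1)
    (hf_moment : Integrable (fun t => f t * |t|))
    (b₁ : A)
    (hb₁ : b₁ = ∫ t, ((f t : ℂ)) •
      (NormedSpace.exp (((t : ℂ) * Complex.I) • a) * b *
        NormedSpace.exp ((-((t : ℂ) * Complex.I)) • a))) :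
    ‖b - b₁‖ ≤ (∫ t, f t * |t|) * ‖a * b - b * a‖ ∧
      ‖a * b₁ - b₁ * a‖ ≤ ‖a * b - b * a‖ := by
  set x : A := I • a
  have hx : x ∈ skewAdjoint A := ha.smul_mem_skewAdjoint conj_I
  have hb₁' : b₁ = ∫ t, f t • expConj x b t := by
    simp_rw [hb₁, expConj, ← neg_mul, ← ofReal_neg, mul_smul, coe_smul]
    rfl
  have hint : Integrable (fun t => f t • expConj x b t) :=
    hf_int.smul_bdd ‖b‖ (continuous_expConj x b).aestronglyMeasurable
      (ae_of_all _ fun t => (norm_expConj hx b t).le)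
  have hxb : ‖x * b - b * x‖ = ‖a * b - b * a‖ := by
    rw [smul_mul_assoc, mul_smul_comm, ← smul_sub, norm_smul, norm_I, one_mul]
  constructor
  · rw [hb₁', sub_integral_smul_eq_integral_smul_sub hf_int hf_one hint, ← hxb]
    calc _ ≤ ∫ t, f t * (|t| * ‖x * b - b * x‖) :=
          norm_integral_smul_le_of_norm_le hf_nonneg
            (by simpa only [mul_assoc] using hf_moment.mul_const (‖x * b - b * x‖))
            fun t => norm_sub_rev b _ ▸ norm_expConj_sub_le hx b t
      _ = (∫ t, f t * |t|) * ‖x * b - b * x‖ := by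
          simp_rw [← mul_assoc, integral_mul_const]
  · have hcomm : Commute a x := (Commute.refl a).smul_right I
    rw [hb₁', mul_integral_sub_integral_mul hint]
    simp_rw [mul_smul_comm, smul_mul_assoc, ← smul_sub, hcomm.mul_expConj_sub_expConj_mul]
    calc _ ≤ ∫ t, f t * ‖a * b - b * a‖ :=
          norm_integral_smul_le_of_norm_le hf_nonneg (hf_int.mul_const _)
            fun t => (norm_expConj hx _ t).le
      _ = ‖a * b - b * a‖ := by rw [integral_mul_const, hf_one, one_mul]

/-- Smoothing by averaging over the unitary group generated by a self-adjoint
element: norm estimates for `b₁ = ∫ f(t) e^{ita} b e^{-ita} dt`. -/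
theorem stmt0 {A : Type*} [CStarAlgebra A]
    (a b : A) (ha : IsSelfAdjoint a)
    (f : ℝ → ℝ) (hf_nonneg : ∀ t, 0 ≤ f t) (hf_cont : Continuous f)
    (hf_int : Integrable f) (hf_one : (∫ t, f t) = 1)
    (hf_moment : Integrable (fun t => f t * |t|))
    (b₁ : A)
    (hb₁ : b₁ = ∫ t, ((f t : ℂ)) •
      (NormedSpace.exp (((t : ℂ) * Complex.I) • a) * b *
        NormedSpace.exp ((-((t : ℂ) * Complex.I)) • a))) :
    ‖b - b₁‖ ≤ (∫ t, f t * |t|) * ‖a * b - b * a‖ ∧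
      ‖a * b₁ - b₁ * a‖ ≤ ‖a * b - b * a‖ :=
  stmt0_general a b ha f hf_nonneg hf_int hf_one hf_moment b₁ hb₁
end

section
/- Let A be a C*-algebra and {p_k : k ∈ ℤ} a finite family of mutually orthogonal projections in A summing to 1, and let a ∈ A be such that p_i a p_j = 0 whenever |i - j| > 1. If ‖[p_k, a]‖ < ε for all k, then ‖a - Σ_k p_k a p_k‖ < 4ε. -/
section Aux

variable {A : Type*} [CStarAlgebra A] [PartialOrder A] [StarOrderedRing A]

private lemma algMap_nonneg' (r : ℝ) (hr : 0 ≤ r) : (0:A) ≤ algebraMap ℝ A r := by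
  have h := star_mul_self_nonneg (algebraMap ℝ A (Real.sqrt r))
  rwa [(IsSelfAdjoint.algebraMap A (isSelfAdjoint_iff.mpr rfl)).star_eq, ← map_mul,
    Real.mul_self_sqrt hr] at h

private lemma algMap_mono' {r t : ℝ} (h : r ≤ t) :
    algebraMap ℝ A r ≤ algebraMap ℝ A t := by
  rw [← sub_nonneg, ← map_sub]
  exact algMap_nonneg' _ (by linarith)

/-- Norm bound for a sum of elements with mutually orthogonal supports. -/
private lemma orthsum (t : Finset ℤ) (x e : ℤ → A) (M : ℝ) (hM : 0 ≤ M)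
    (hesa : ∀ k ∈ t, IsSelfAdjoint (e k))
    (hid : ∀ k ∈ t, e k * e k = e k)
    (hx : ∀ k ∈ t, x k * e k = x k)
    (hortho : ∀ k ∈ t, ∀ l ∈ t, k ≠ l → star (x k) * x l = 0)
    (hsume : (∑ k ∈ t, e k) ≤ 1)
    (hnorm : ∀ k ∈ t, ‖x k‖ ≤ M) :
    ‖∑ k ∈ t, x k‖ ≤ M := by
  set S := ∑ k ∈ t, x k with hS
  have hSS : star S * S = ∑ k ∈ t, star (x k) * x k := by
    rw [hS, star_sum, Finset.sum_mul_sum]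
    refine Finset.sum_congr rfl fun i hi => ?_
    refine Finset.sum_eq_single i (fun j hj hne => hortho i hi j hj (Ne.symm hne))
      (fun h => absurd hi h)
  have hterm : ∀ k ∈ t, star (x k) * x k ≤ (M ^ 2) • e k := by
    intro k hk
    have h1 : star (x k) * x k ≤ algebraMap ℝ A (M ^ 2) :=
      le_trans CStarAlgebra.star_mul_le_algebraMap_norm_sq
        (algMap_mono' (by nlinarith [hnorm k hk, norm_nonneg (x k)]))
    have h2 := star_left_conjugate_le_conjugate h1 (e k)
    have h3 : star (e k) * (star (x k) * x k) * e k = star (x k) * x k := by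
      conv_rhs => rw [← hx k hk]
      rw [star_mul, (hesa k hk).star_eq]
      noncomm_ring
    have h4 : star (e k) * algebraMap ℝ A (M ^ 2) * e k = (M ^ 2) • e k := by
      rw [(hesa k hk).star_eq, Algebra.algebraMap_eq_smul_one]
      rw [mul_smul_comm, mul_one, smul_mul_assoc, hid k hk]
    rwa [h3, h4] at h2
  have hle : star S * S ≤ algebraMap ℝ A (M ^ 2) := by
    calc star S * S = ∑ k ∈ t, star (x k) * x k := hSS
      _ ≤ ∑ k ∈ t, (M ^ 2) • e k := Finset.sum_le_sum hterm
      _ = (M ^ 2) • ∑ k ∈ t, e k := (Finset.smul_sum).symm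
      _ ≤ algebraMap ℝ A (M ^ 2) := by
          have hc := star_left_conjugate_le_conjugate hsume (algebraMap ℝ A M)
          have hsa : star (algebraMap ℝ A M) = algebraMap ℝ A M :=
            (IsSelfAdjoint.algebraMap A (isSelfAdjoint_iff.mpr rfl)).star_eq
          rw [hsa] at hc
          have e1 : algebraMap ℝ A M * (∑ k ∈ t, e k) * algebraMap ℝ A M
              = (M ^ 2) • ∑ k ∈ t, e k := by
            rw [Algebra.algebraMap_eq_smul_one, smul_mul_assoc, one_mul,
              mul_smul_comm, mul_one, smul_smul, sq]
          have e2 : algebraMap ℝ A M * 1 * algebraMap ℝ A M = algebraMap ℝ A (M ^ 2) := by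
            rw [mul_one, ← map_mul, sq]
          rwa [e1, e2] at hc
  have hnn : (0:A) ≤ star S * S := star_mul_self_nonneg S
  have h5 : ‖star S * S‖ ≤ M ^ 2 :=
    (CStarAlgebra.norm_le_iff_le_algebraMap _ (by positivity) hnn).mpr hle
  rw [CStarRing.norm_star_mul_self] at h5
  nlinarith [norm_nonneg S]

end Aux

/-- If `{p_k}` are mutually orthogonal projections summing to `1`, `p_i a p_j = 0`
for `|i - j| > 1`, and `‖[p_k, a]‖ < ε` for all `k`, then
`‖a - Σ_k p_k a p_k‖ < 4ε`. -/
theorem stmt2 {A : Type*} [CStarAlgebra A]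
    (s : Finset ℤ) (p : ℤ → A) (a : A) (ε : ℝ) (hε : 0 < ε)
    (hsa : ∀ k ∈ s, IsSelfAdjoint (p k))
    (hidem : ∀ k ∈ s, p k * p k = p k)
    (horth : ∀ k ∈ s, ∀ l ∈ s, k ≠ l → p k * p l = 0)
    (hsum : (∑ k ∈ s, p k) = 1)
    (hband : ∀ k ∈ s, ∀ l ∈ s, 1 < |k - l| → p k * a * p l = 0)
    (hcomm : ∀ k ∈ s, ‖p k * a - a * p k‖ < ε) :
    ‖a - ∑ k ∈ s, p k * a * p k‖ < 4 * ε := by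
  letI := CStarAlgebra.spectralOrder A
  haveI := CStarAlgebra.spectralOrderedRing A
  rcases s.eq_empty_or_nonempty with rfl | hs
  · rw [Finset.sum_empty] at hsum ⊢
    haveI : Subsingleton A := subsingleton_of_zero_eq_one hsum
    rw [Subsingleton.elim (a - 0) 0, norm_zero]
    linarith
  -- the sup of the commutator norms
  set M := s.sup' hs fun k => ‖p k * a - a * p k‖ with hMdef
  have hM0 : 0 ≤ M := by
    rw [hMdef]
    exact le_trans (norm_nonneg _)
      (Finset.le_sup' (fun k => ‖p k * a - a * p k‖) hs.choose_spec)
  have hMε : M < ε := (Finset.sup'_lt_iff hs).mpr hcomm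
  -- positivity of the projections
  have hpos : ∀ k ∈ s, (0:A) ≤ p k := fun k hk => by
    have h := star_mul_self_nonneg (p k)
    rwa [(hsa k hk).star_eq, hidem k hk] at h
  -- bound on the corner norms
  have hstep : ∀ k ∈ s, ∀ l ∈ s, k ≠ l → ‖p k * a * p l‖ ≤ M := by
    intro k hk l hl hne
    have hElem : p k * a * p l = p k * (a * p l - p l * a) * p l := by
      have h1 : p k * (a * p l - p l * a) * p l
          = p k * a * (p l * p l) - (p k * p l) * (a * p l) := by noncomm_ring
      rw [h1, hidem l hl, horth k hk l hl hne, zero_mul, sub_zero]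
    have hc : ‖a * p l - p l * a‖ ≤ M := by
      rw [← norm_neg, neg_sub, hMdef]
      exact Finset.le_sup' (fun k => ‖p k * a - a * p k‖) hl
    have hn1 : ‖p k‖ ≤ 1 := by
      have h2 : ‖p k‖ * ‖p k‖ = ‖p k‖ := by
        conv_lhs => rw [← CStarRing.norm_star_mul_self]
        rw [(hsa k hk).star_eq, hidem k hk]
      nlinarith [norm_nonneg (p k)]
    have hn2 : ‖p l‖ ≤ 1 := by
      have h2 : ‖p l‖ * ‖p l‖ = ‖p l‖ := by
        conv_lhs => rw [← CStarRing.norm_star_mul_self]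
        rw [(hsa l hl).star_eq, hidem l hl]
      nlinarith [norm_nonneg (p l)]
    rw [hElem]
    calc ‖p k * (a * p l - p l * a) * p l‖
        ≤ ‖p k * (a * p l - p l * a)‖ * ‖p l‖ := norm_mul_le _ _
      _ ≤ (‖p k‖ * ‖a * p l - p l * a‖) * ‖p l‖ := by
          gcongr; exact norm_mul_le _ _
      _ ≤ 1 * M * 1 := by
          gcongr
      _ = M := by ring
  -- the generic off-diagonal bound
  have hoff : ∀ d : ℤ, d ≠ 0 →
      ‖∑ i ∈ s.filter (fun i => i + d ∈ s), p i * a * p (i + d)‖ ≤ M := by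
    intro d hd
    set t := s.filter (fun i => i + d ∈ s) with ht
    have hmem : ∀ i ∈ t, i ∈ s ∧ i + d ∈ s := fun i hi => Finset.mem_filter.mp hi
    refine orthsum t (fun i => p i * a * p (i + d)) (fun i => p (i + d)) M hM0
      (fun k hk => hsa _ (hmem k hk).2) (fun k hk => hidem _ (hmem k hk).2) ?_ ?_ ?_
      (fun k hk => hstep k (hmem k hk).1 (k + d) (hmem k hk).2 (by omega))
    · intro k hk
      rw [mul_assoc, hidem _ (hmem k hk).2]
    · intro k hk l hl hne
      have hkl : p k * p l = 0 := horth k (hmem k hk).1 l (hmem l hl).1 hne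
      have hstar : star (p k * a * p (k + d)) = p (k + d) * star a * p k := by
        simp only [star_mul, (hsa _ (hmem k hk).2).star_eq, (hsa _ (hmem k hk).1).star_eq,
          mul_assoc]
      rw [hstar, show (p (k + d) * star a * p k) * (p l * a * p (l + d))
          = (p (k + d) * star a) * (p k * p l) * (a * p (l + d)) by noncomm_ring,
        hkl, mul_zero, zero_mul]
    · -- sum of right supports is ≤ 1
      have himg : t.image (fun i => i + d) ⊆ s := by
        intro j hj
        obtain ⟨i, hi, rfl⟩ := Finset.mem_image.mp hj
        exact (hmem i hi).2
      calc (∑ k ∈ t, p (k + d))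
          = ∑ j ∈ t.image (fun i => i + d), p j := by
            rw [Finset.sum_image (fun i _ j _ h => by omega)]
        _ ≤ ∑ j ∈ s, p j :=
            Finset.sum_le_sum_of_subset_of_nonneg himg (fun j hj _ => hpos j hj)
        _ = 1 := hsum
  -- decomposition of a - diagonal
  have hexpand : a = ∑ i ∈ s, ∑ j ∈ s, p i * a * p j := by
    calc a = (∑ k ∈ s, p k) * a * (∑ k ∈ s, p k) := by rw [hsum, one_mul, mul_one]
      _ = ∑ i ∈ s, ∑ j ∈ s, p i * a * p j := by rw [Finset.sum_mul, Finset.sum_mul_sum]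
  have hdecomp : a - ∑ k ∈ s, p k * a * p k
      = (∑ i ∈ s.filter (fun i => i + 1 ∈ s), p i * a * p (i + 1))
      + (∑ i ∈ s.filter (fun i => i + (-1) ∈ s), p i * a * p (i + (-1))) := by
    have hinner : ∀ i ∈ s, ∑ j ∈ s, p i * a * p j
        = p i * a * p i + ((if i + 1 ∈ s then p i * a * p (i + 1) else 0)
          + (if i + (-1) ∈ s then p i * a * p (i + (-1)) else 0)) := by
      intro i hi
      have hsplit : ∑ j ∈ s, p i * a * p j
          = ∑ j ∈ s, ((if j = i then p i * a * p i else 0)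
            + ((if j = i + 1 then p i * a * p (i + 1) else 0)
            + (if j = i + (-1) then p i * a * p (i + (-1)) else 0))) := by
        refine Finset.sum_congr rfl fun j hj => ?_
        by_cases h1 : j = i
        · subst h1; simp [show ¬(j = j + 1) by omega, show ¬(j = j + (-1)) by omega]
        · by_cases h2 : j = i + 1
          · subst h2; simp [show ¬(i+1 = i) by omega, show ¬(i+1 = i + (-1)) by omega]
          · by_cases h3 : j = i + (-1)
            · subst h3; simp [show ¬(i + (-1) = i) by omega,
                show ¬(i + (-1) = i + 1) by omega]
            · have hz : p i * a * p j = 0 := hband i hi j hj (by rw [lt_abs]; omega)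
              simp [h1, h2, h3, hz]
      rw [hsplit, Finset.sum_add_distrib, Finset.sum_add_distrib,
        Finset.sum_ite_eq' s i (fun _ => p i * a * p i),
        Finset.sum_ite_eq' s (i + 1) (fun _ => p i * a * p (i + 1)),
        Finset.sum_ite_eq' s (i + (-1)) (fun _ => p i * a * p (i + (-1))),
        if_pos hi]
    have h6 : a = (∑ k ∈ s, p k * a * p k)
        + ((∑ i ∈ s.filter (fun i => i + 1 ∈ s), p i * a * p (i + 1))
        + (∑ i ∈ s.filter (fun i => i + (-1) ∈ s), p i * a * p (i + (-1)))) := by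
      conv_lhs => rw [hexpand]
      rw [Finset.sum_congr rfl hinner, Finset.sum_add_distrib, Finset.sum_add_distrib,
        Finset.sum_filter, Finset.sum_filter]
    exact sub_eq_of_eq_add' h6
  rw [hdecomp]
  have hU := hoff 1 (by omega)
  have hL := hoff (-1) (by omega)
  calc ‖(∑ i ∈ s.filter (fun i => i + 1 ∈ s), p i * a * p (i + 1))
      + (∑ i ∈ s.filter (fun i => i + (-1) ∈ s), p i * a * p (i + (-1)))‖
      ≤ ‖∑ i ∈ s.filter (fun i => i + 1 ∈ s), p i * a * p (i + 1)‖
        + ‖∑ i ∈ s.filter (fun i => i + (-1) ∈ s), p i * a * p (i + (-1))‖ :=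
        norm_add_le _ _
    _ ≤ M + M := add_le_add hU hL
    _ < 4 * ε := by linarith
end

section
/- Let μ be a Borel probability measure on [a,b] ⊂ ℝ with mean ∫ x dμ = c and variance v. Then v ≤ (b − c)(c − a) (Bhatia–Davis inequality). -/
open MeasureTheory ProbabilityTheory

theorem stmt10_general (a b : ℝ)
    (μ : Measure ℝ) [IsProbabilityMeasure μ]
    (hsupp : ∀ᵐ x ∂μ, x ∈ Set.Icc a b)
    (c v : ℝ) (hc : c = ∫ x, x ∂μ) (hv : v = (∫ x, x ^ 2 ∂μ) - c ^ 2) :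
    v ≤ (b - c) * (c - a) := by
  have hvar : variance (fun x => x) μ = v := by
    rw [variance_eq_sub (memLp_of_bounded hsupp aestronglyMeasurable_id 2), hv, hc]
    rfl
  rw [← hvar, hc]
  exact variance_le_sub_mul_sub hsupp aemeasurable_id

/-- Bhatia–Davis inequality: for a probability measure supported in `[a,b]`
with mean `c` and variance `v`, one has `v ≤ (b-c)(c-a)`. -/
theorem stmt10 (a b : ℝ) (hab : a < b)
    (μ : Measure ℝ) [IsProbabilityMeasure μ]
    (hsupp : ∀ᵐ x ∂μ, x ∈ Set.Icc a b)
    (h1 : Integrable (fun x => x) μ) (h2 : Integrable (fun x => x ^ 2) μ)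
    (c v : ℝ) (hc : c = ∫ x, x ∂μ) (hv : v = (∫ x, x ^ 2 ∂μ) - c ^ 2) :
    v ≤ (b - c) * (c - a) :=
  stmt10_general a b μ hsupp c v hc hv
end

section
/- Let A be a simple unital C*-algebra, α : ℝ → Aut(A) a one-parameter group, and u, u' two α-cocycles with Ad(u_t) α_t = Ad(u'_t) α_t for all t. Then there exists p ∈ ℝ such that u'_t = e^{ipt} u_t for all t. -/
/-!
Since `α_t` is onto, `Ad u_t` and `Ad u'_t` agree everywhere, so `w_t = u_t^* u'_t` is central.
In a Banach algebra without nontrivial closed ideals a central `z` is a scalar: for `μ` in the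
spectrum of `z`, the ideal generated by the central non-unit `z - μ` consists of non-units, so its
closure is a proper closed ideal, hence zero. The cocycle identities make the scalars `χ_t` with
`w_t = χ_t • 1` a continuous unitary character of `ℝ`; averaging `χ (t + s) = χ t χ s` over a
short interval shows that `χ` is differentiable with `χ' = a χ`, so `χ t = exp (a t)` with `a ∈ iℝ`.
-/

namespace TwoSidedIdeal

variable {R : Type*} [Ring R]

protected def closure [TopologicalSpace R] [IsTopologicalRing R] (I : TwoSidedIdeal R) :
    TwoSidedIdeal R :=
  .mk' (closure I) (subset_closure I.zero_mem)
    (fun hx hy => map_mem_closure₂ continuous_add hx hy fun _ ha _ hb => I.add_mem ha hb)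
    (fun hx => map_mem_closure continuous_neg hx fun _ => I.neg_mem)
    (fun {x _} hy => map_mem_closure (continuous_const_mul x) hy fun a => I.mul_mem_left x a)
    (fun {_ y} hx =>
      map_mem_closure (f := (· * y)) (continuous_mul_const y) hx fun a => I.mul_mem_right a y)

theorem coe_closure [TopologicalSpace R] [IsTopologicalRing R] (I : TwoSidedIdeal R) :
    (I.closure : Set R) = closure I :=
  coe_mk' ..

def ofMemCenter {c : R} (hc : c ∈ Set.center R) : TwoSidedIdeal R :=
  .mk' (Set.range (c * ·)) ⟨0, mul_zero c⟩
    (by rintro _ _ ⟨a, rfl⟩ ⟨b, rfl⟩; exact ⟨a + b, mul_add c a b⟩)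
    (by rintro _ ⟨a, rfl⟩; exact ⟨-a, mul_neg c a⟩)
    (by rintro x _ ⟨a, rfl⟩; exact ⟨x * a, by simp only [← mul_assoc, (hc.comm x).eq]⟩)
    (by rintro _ x ⟨a, rfl⟩; exact ⟨a * x, (mul_assoc c a x).symm⟩)

theorem coe_ofMemCenter {c : R} (hc : c ∈ Set.center R) :
    (ofMemCenter hc : Set R) = Set.range (c * ·) :=
  coe_mk' ..

end TwoSidedIdeal

section SimpleBanachAlgebra

variable {A : Type*}

theorem eq_zero_of_mem_center_of_not_isUnit [NormedRing A] [CompleteSpace A]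
    (hsimple : ∀ I : TwoSidedIdeal A, IsClosed (I : Set A) → I = ⊥ ∨ I = ⊤)
    {c : A} (hc : c ∈ Set.center A) (hcu : ¬IsUnit c) : c = 0 := by
  set I := (TwoSidedIdeal.ofMemCenter hc).closure
  have hI : (I : Set A) ⊆ nonunits A := by
    rw [TwoSidedIdeal.coe_closure, TwoSidedIdeal.coe_ofMemCenter]
    refine closure_minimal ?_ nonunits.isClosed
    rintro _ ⟨a, rfl⟩ h
    exact hcu ((hc.comm a).isUnit_mul_iff.mp h).1
  rcases hsimple I (by rw [TwoSidedIdeal.coe_closure]; exact isClosed_closure) with h | h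
  · have hcI : c ∈ I := by
      rw [← SetLike.mem_coe, TwoSidedIdeal.coe_closure, TwoSidedIdeal.coe_ofMemCenter]
      exact subset_closure ⟨1, mul_one c⟩
    rwa [h, TwoSidedIdeal.mem_bot] at hcI
  · exact absurd (hI (h ▸ TwoSidedIdeal.mem_top (x := (1 : A)))) one_notMem_nonunits

theorem exists_eq_algebraMap_of_mem_center [NormedRing A] [NormedAlgebra ℂ A] [CompleteSpace A]
    [Nontrivial A] (hsimple : ∀ I : TwoSidedIdeal A, IsClosed (I : Set A) → I = ⊥ ∨ I = ⊤)
    {z : A} (hz : z ∈ Set.center A) : ∃ μ : ℂ, z = algebraMap ℂ A μ := by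
  obtain ⟨μ, hμ⟩ := spectrum.nonempty z
  refine ⟨μ, (sub_eq_zero.mp ?_).symm⟩
  exact eq_zero_of_mem_center_of_not_isUnit hsimple
    ((Subring.center A).sub_mem (Set.algebraMap_mem_center μ) hz) (spectrum.mem_iff.mp hμ)

end SimpleBanachAlgebra

theorem star_mul_mem_center_of_conj_eq {R : Type*} [Monoid R] [StarMul R] {u u' : R}
    (hu : u ∈ unitary R) (hu' : u' ∈ unitary R) (h : ∀ y, u * y * star u = u' * y * star u') :
    star u * u' ∈ Set.center R := by
  refine Semigroup.mem_center_iff.mpr fun g => ?_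
  calc g * (star u * u') = star u * (u * g * star u) * u' := by
        simp only [← mul_assoc, Unitary.star_mul_self_of_mem hu, one_mul]
    _ = star u * u' * g := by
        rw [h]; simp only [mul_assoc, Unitary.star_mul_self_of_mem hu', mul_one]

theorem map_add_eq_mul_of_star_mul_eq_algebraMap {G K A : Type*} [Add G] [Field K] [Ring A]
    [StarRing A] [Algebra K A] [Nontrivial A] {α : G → A ≃⋆ₐ[K] A} {u u' : G → A}
    (hc : ∀ s t, u (s + t) = u s * α s (u t)) (hc' : ∀ s t, u' (s + t) = u' s * α s (u' t))
    {χ : G → K} (hχ : ∀ t, star (u t) * u' t = algebraMap K A (χ t)) (s t : G) :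
    χ (s + t) = χ s * χ t := by
  apply (algebraMap K A).injective
  calc algebraMap K A (χ (s + t))
      = α s (star (u t)) * (star (u s) * u' s) * α s (u' t) := by
        rw [← hχ, hc, hc', star_mul, map_star]; simp only [mul_assoc]
    _ = algebraMap K A (χ s) * α s (star (u t) * u' t) := by
        rw [hχ, ← Algebra.commutes, mul_assoc, map_mul]
    _ = algebraMap K A (χ s * χ t) := by
        rw [hχ, AlgHomClass.commutes, map_mul]

open Complex intervalIntegral

theorem eq_exp_mul_of_hasDerivAt {f : ℝ → ℂ} {a : ℂ} (hf : ∀ t, HasDerivAt f (a * f t) t)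
    (t : ℝ) : f t = exp (a * t) * f 0 := by
  have hg : ∀ s : ℝ, HasDerivAt (fun s : ℝ => exp (-a * s) * f s) 0 s := fun s => by
    have hlin : HasDerivAt (fun s : ℝ => -a * s) (-a) s := by
      simpa using (hasDerivAt_id (s : ℂ)).comp_ofReal.const_mul (-a)
    exact (hlin.cexp.mul (hf s)).congr_deriv (by ring)
  have hconst := is_const_of_deriv_eq_zero (fun s => (hg s).differentiableAt)
    (fun s => (hg s).deriv) t 0
  simp only [ofReal_zero, mul_zero, exp_zero, one_mul] at hconst
  rw [← hconst, ← mul_assoc, ← exp_add, neg_mul, add_neg_cancel, exp_zero, one_mul]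

namespace AddChar

variable (ψ : AddChar ℝ ℂ) (hψ : Continuous ψ)
include hψ

theorem exists_intervalIntegral_ne_zero_of_continuous :
    ∃ δ : ℝ, ∫ s in (0 : ℝ)..δ, ψ s ≠ 0 := by
  by_contra! h
  have hderiv := (hψ.integral_hasStrictDerivAt 0 0).hasDerivAt
  simp only [h, map_zero_eq_one] at hderiv
  exact one_ne_zero (hderiv.unique (hasDerivAt_const 0 0))

theorem exists_hasDerivAt_of_continuous : ∃ a : ℂ, ∀ t, HasDerivAt ψ (a * ψ t) t := by
  obtain ⟨δ, hK⟩ := ψ.exists_intervalIntegral_ne_zero_of_continuous hψ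
  set K := ∫ s in (0 : ℝ)..δ, ψ s
  set F : ℝ → ℂ := fun x => ∫ s in (0 : ℝ)..x, ψ s
  -- averaging `ψ (t + s) = ψ t * ψ s` over `s ∈ [0, δ]` expresses `ψ` through its primitive
  have hψF : ∀ t, ψ t = (F (t + δ) - F t) * K⁻¹ := fun t => by
    have h : ψ t * K = F (t + δ) - F t := by
      simp only [K, F, ← integral_const_mul, ← map_add_eq_mul]
      rw [integral_comp_add_left (fun s => ψ s), add_zero,
        integral_interval_sub_left (hψ.intervalIntegrable _ _) (hψ.intervalIntegrable _ _)]
    rw [← h, mul_inv_cancel_right₀ hK]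
  refine ⟨(ψ δ - 1) * K⁻¹, fun t => ?_⟩
  have hF : ∀ x, HasDerivAt F (ψ x) x := fun x => (hψ.integral_hasStrictDerivAt 0 x).hasDerivAt
  have h : HasDerivAt (fun x => (F (x + δ) - F x) * K⁻¹) ((ψ (t + δ) - ψ t) * K⁻¹) t :=
    (((hF (t + δ)).comp_add_const t δ).sub (hF t)).mul_const K⁻¹
  rw [← funext hψF] at h
  convert h using 1
  rw [map_add_eq_mul]; ring

theorem exists_eq_exp_mul_of_continuous : ∃ a : ℂ, ∀ t : ℝ, ψ t = exp (a * t) := by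
  obtain ⟨a, ha⟩ := ψ.exists_hasDerivAt_of_continuous hψ
  exact ⟨a, fun t => by rw [eq_exp_mul_of_hasDerivAt ha t, map_zero_eq_one, mul_one]⟩

theorem exists_eq_exp_I_mul_of_continuous_of_norm_eq_one (hnorm : ∀ t, ‖ψ t‖ = 1) :
    ∃ p : ℝ, ∀ t : ℝ, ψ t = exp (I * p * t) := by
  obtain ⟨a, ha⟩ := ψ.exists_eq_exp_mul_of_continuous hψ
  have hre : a.re = 0 := by simpa [ha, norm_exp] using hnorm 1
  refine ⟨a.im, fun t => ?_⟩
  rw [ha]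
  congr 1
  apply Complex.ext <;> simp [hre]

end AddChar

theorem stmt15_general {A : Type*} [CStarAlgebra A]
    (hsimple : ∀ I : TwoSidedIdeal A, IsClosed (I : Set A) → I = ⊥ ∨ I = ⊤)
    (α : ℝ → (A ≃⋆ₐ[ℂ] A))
    (u u' : ℝ → A) (hucont : Continuous u) (hu'cont : Continuous u')
    (hu : ∀ t, u t ∈ unitary A) (hu' : ∀ t, u' t ∈ unitary A)
    (hc : ∀ s t, u (s + t) = u s * α s (u t))
    (hc' : ∀ s t, u' (s + t) = u' s * α s (u' t))
    (had : ∀ t x, u t * α t x * star (u t) = u' t * α t x * star (u' t)) :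
    ∃ p : ℝ, ∀ t, u' t = Complex.exp (Complex.I * p * t) • u t := by
  rcases subsingleton_or_nontrivial A with hA | hA
  · exact ⟨0, fun t => Subsingleton.elim _ _⟩
  have hcenter : ∀ t, star (u t) * u' t ∈ Set.center A := fun t =>
    star_mul_mem_center_of_conj_eq (hu t) (hu' t) fun y => by
      simpa using had t ((α t).symm y)
  choose χ hχ using fun t => exists_eq_algebraMap_of_mem_center hsimple (hcenter t)
  have hχ_norm : ∀ t, ‖χ t‖ = 1 := fun t => by
    rw [← norm_algebraMap' A, ← hχ,
      CStarRing.norm_of_mem_unitary (mul_mem (Unitary.star_mem (hu t)) (hu' t))]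
  have hχ_add := map_add_eq_mul_of_star_mul_eq_algebraMap hc hc' hχ
  have hχ_zero : χ 0 = 1 := by
    have h := hχ_add 0 0
    rw [add_zero] at h
    exact (mul_eq_left₀ (norm_ne_zero_iff.mp (by rw [hχ_norm]; exact one_ne_zero))).mp h.symm
  have hχ_cont : Continuous χ := by
    rw [(algebraMap_isometry ℂ A).isEmbedding.continuous_iff, Function.comp_def, ← funext hχ]
    exact hucont.star.mul hu'cont
  obtain ⟨p, hp⟩ := AddChar.exists_eq_exp_I_mul_of_continuous_of_norm_eq_one
    ⟨χ, hχ_zero, hχ_add⟩ hχ_cont hχ_norm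
  refine ⟨p, fun t => ?_⟩
  rw [← hp t, AddChar.coe_mk, Algebra.smul_def, Algebra.commutes, ← hχ, ← mul_assoc,
    Unitary.mul_star_self_of_mem (hu t), one_mul]

/-- In a simple unital C*-algebra, two continuous α-cocycles implementing the
same cocycle perturbation of `α` differ by a character: `u'_t = e^{ipt} u_t`. -/
theorem stmt15 {A : Type*} [CStarAlgebra A]
    (hsimple : ∀ I : TwoSidedIdeal A, IsClosed (I : Set A) → I = ⊥ ∨ I = ⊤)
    (α : ℝ → (A ≃⋆ₐ[ℂ] A)) (hα : ∀ s t x, α (s + t) x = α s (α t x))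
    (u u' : ℝ → A) (hucont : Continuous u) (hu'cont : Continuous u')
    (hu : ∀ t, u t ∈ unitary A) (hu' : ∀ t, u' t ∈ unitary A)
    (hc : ∀ s t, u (s + t) = u s * α s (u t))
    (hc' : ∀ s t, u' (s + t) = u' s * α s (u' t))
    (had : ∀ t x, u t * α t x * star (u t) = u' t * α t x * star (u' t)) :
    ∃ p : ℝ, ∀ t, u' t = Complex.exp (Complex.I * p * t) • u t :=
  stmt15_general hsimple α u u' hucont hu'cont hu hu' hc hc' had
end
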